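/- Φ'''(ε₁) and Φ'''(ε₂) are isomorphic Lie algebras if ε₁/ε₂ is a square in the base field F (ε₁, ε₂ ≠ 0). -/
import Mathlib


noncomputable section

/-- The bracket of `Φ‴(ε)` on `Fin 4 → K`, basis `e₁,…,e₄` indexed `0,…,3`:
`[e₁,e₃]=[e₂,e₄]=-e₁`, `[e₁,e₄]=εe₂`, `[e₂,e₃]=-e₂`. -/
def brPhi3 {K : Type*} [Field K] (ε : K) (x y : Fin 4 → K) : Fin 4 → K :=
  ![ -(x 0 * y 2 - x 2 * y 0) - (x 1 * y 3 - x 3 * y 1),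
     ε * (x 0 * y 3 - x 3 * y 0) - (x 1 * y 2 - x 2 * y 1),
     0,
     0 ]

/-- `Φ‴(ε₁)` and `Φ‴(ε₂)` are isomorphic Lie algebras if `ε₁/ε₂` is a square
in the base field (with `ε₁, ε₂ ≠ 0`). -/
theorem phi3_iso_of_square_ratio {K : Type*} [Field K] (h2 : (2 : K) ≠ 0)
    (ε₁ ε₂ : K) (hε₁ : ε₁ ≠ 0) (hε₂ : ε₂ ≠ 0) (hsq : ∃ c : K, ε₁ / ε₂ = c ^ 2) :
    ∃ φ : (Fin 4 → K) ≃ₗ[K] (Fin 4 → K),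
      ∀ x y : Fin 4 → K, φ (brPhi3 ε₁ x y) = brPhi3 ε₂ (φ x) (φ y) := by
  obtain ⟨c, hc⟩ := hsq
  have hc' : ε₂ * c ^ 2 = ε₁ := by
    field_simp at hc
    linear_combination -hc
  have hcne : c ≠ 0 := by
    rintro rfl
    simp at hc'
    exact hε₁ hc'.symm
  let d : Fin 4 → K := ![c, 1, 1, c]
  have hdne : ∀ i, d i ≠ 0 := by
    intro i
    fin_cases i <;> simp [d, hcne]
  let e : (Fin 4 → K) ≃ₗ[K] (Fin 4 → K) :=
  { toFun := fun x i => d i * x i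
    invFun := fun x i => (d i)⁻¹ * x i
    map_add' := by intro x y; funext i; simp [Pi.add_apply]; ring
    map_smul' := by intro r x; funext i; simp [Pi.smul_apply, smul_eq_mul]; ring
    left_inv := by
      intro x; funext i
      show (d i)⁻¹ * (d i * x i) = x i
      rw [← mul_assoc, inv_mul_cancel₀ (hdne i), one_mul]
    right_inv := by
      intro x; funext i
      show d i * ((d i)⁻¹ * x i) = x i
      rw [← mul_assoc, mul_inv_cancel₀ (hdne i), one_mul] }
  have he : ∀ (x : Fin 4 → K) (i : Fin 4), e x i = d i * x i := fun x i => rfl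
  refine ⟨e, ?_⟩
  intro x y
  funext i
  fin_cases i
  · show e (brPhi3 ε₁ x y) ⟨0, by norm_num⟩ = _
    rw [he]
    show c * _ = _
    simp only [brPhi3, he, Matrix.cons_val_zero]
    show c * (-(x 0 * y 2 - x 2 * y 0) - (x 1 * y 3 - x 3 * y 1)) =
      -(d 0 * x 0 * (d 2 * y 2) - d 2 * x 2 * (d 0 * y 0)) -
        (d 1 * x 1 * (d 3 * y 3) - d 3 * x 3 * (d 1 * y 1))
    simp only [d, Matrix.cons_val_zero, Matrix.cons_val_one, Matrix.head_cons,
      Matrix.cons_val_two, Matrix.tail_cons, Matrix.cons_val_three]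
    ring
  · show e (brPhi3 ε₁ x y) ⟨1, by norm_num⟩ = _
    rw [he]
    show (1:K) * _ = _
    simp only [brPhi3, he, Matrix.cons_val_one, Matrix.head_cons]
    show (1:K) * (ε₁ * (x 0 * y 3 - x 3 * y 0) - (x 1 * y 2 - x 2 * y 1)) =
      ε₂ * (d 0 * x 0 * (d 3 * y 3) - d 3 * x 3 * (d 0 * y 0)) -
        (d 1 * x 1 * (d 2 * y 2) - d 2 * x 2 * (d 1 * y 1))
    simp only [d, Matrix.cons_val_zero, Matrix.cons_val_one, Matrix.head_cons,
      Matrix.cons_val_two, Matrix.tail_cons, Matrix.cons_val_three]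
    linear_combination (x 3 * y 0 - x 0 * y 3) * hc'
  · show e (brPhi3 ε₁ x y) ⟨2, by norm_num⟩ = _
    rw [he]
    simp [brPhi3]
  · show e (brPhi3 ε₁ x y) ⟨3, by norm_num⟩ = _
    rw [he]
    simp [brPhi3]
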